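/- arXiv:1709.09951 — 2 statements merged into one kernel-verified Lean document; each statement's English description precedes it below -/
import Mathlib

section
/- Let z1, z2 : [a,b] → ℝ^d be solutions of z'(t) = f1(z(t)) and z'(t) = f2(z(t)) respectively with the same initial condition z1(a) = z2(a) = η, where f2 = f1 + H and f2 is Lipschitz with constant L. Then for any a ≤ x ≤ t ≤ b, sup_{ξ ∈ [x,t]} ‖z2(ξ) − z1(ξ)‖ ≥ (1/(2 + L(t−x))) · ‖∫_x^t H(z1(ξ)) dξ‖. -/
/-!
The difference `w = z₂ - z₁` satisfies `w' = (f₂(z₂) - f₂(z₁)) + H(z₁)`, so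
integrating over `[x, t]` gives `∫ H(z₁) = w(t) - w(x) - ∫ (f₂(z₂) - f₂(z₁))`.
With `M` the supremum of `‖w‖` on `[x, t]`, the first two terms have norm at most `M`
each and, by the Lipschitz bound, the last one at most `L M (t - x)`.
-/

open Set intervalIntegral MeasureTheory

lemma le_iSup_Icc_of_continuousOn {f : ℝ → ℝ} {x t : ℝ} (hf : ContinuousOn f (Icc x t))
    {ξ : ℝ} (hξ : ξ ∈ Icc x t) : f ξ ≤ ⨆ s : Icc x t, f s :=
  le_ciSup (isCompact_range hf.domRestrict).bddAbove ⟨ξ, hξ⟩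

lemma norm_integral_le_of_hasDerivAt_add {E : Type*} [NormedAddCommGroup E] [NormedSpace ℝ E]
    [CompleteSpace E] {w g h : ℝ → E} {x t C : ℝ} (hxt : x ≤ t)
    (hw : ∀ ξ ∈ Icc x t, HasDerivAt w (g ξ + h ξ) ξ)
    (hg : IntervalIntegrable g volume x t) (hh : IntervalIntegrable h volume x t)
    (hgC : ∀ ξ ∈ Ioc x t, ‖g ξ‖ ≤ C) :
    ‖∫ ξ in x..t, h ξ‖ ≤ ‖w t‖ + ‖w x‖ + C * (t - x) := by
  have hFTC : w t - w x = (∫ ξ in x..t, g ξ) + ∫ ξ in x..t, h ξ := by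
    rw [← integral_add hg hh]
    exact (integral_eq_sub_of_hasDerivAt (by rwa [uIcc_of_le hxt]) (hg.add hh)).symm
  have hg_int : ‖∫ ξ in x..t, g ξ‖ ≤ C * (t - x) :=
    (norm_integral_le_of_norm_le_const (by rwa [uIoc_of_le hxt])).trans_eq
      (by rw [abs_of_nonneg (sub_nonneg.2 hxt)])
  calc ‖∫ ξ in x..t, h ξ‖ = ‖w t - w x - ∫ ξ in x..t, g ξ‖ := by
        rw [hFTC, add_sub_cancel_left]
    _ ≤ ‖w t‖ + ‖w x‖ + ‖∫ ξ in x..t, g ξ‖ :=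
      (norm_sub_le _ _).trans (add_le_add_left (norm_sub_le _ _) _)
    _ ≤ ‖w t‖ + ‖w x‖ + C * (t - x) := by gcongr

theorem stmt0_general
    (d : ℕ) (a b : ℝ)
    (f1 f2 H : (Fin d → ℝ) → (Fin d → ℝ))
    (hH : f2 = f1 + H)
    (L : ℝ) (hL : 0 ≤ L) (hf2 : LipschitzWith (Real.toNNReal L) f2)
    (z1 z2 : ℝ → (Fin d → ℝ))
    (hz1 : ∀ t ∈ Set.Icc a b, HasDerivAt z1 (f1 (z1 t)) t)
    (hz2 : ∀ t ∈ Set.Icc a b, HasDerivAt z2 (f2 (z2 t)) t)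
    (x t : ℝ) (hax : a ≤ x) (hxt : x ≤ t) (htb : t ≤ b) :
    (1 / (2 + L * (t - x))) * ‖∫ ξ in x..t, H (z1 ξ)‖ ≤
      ⨆ ξ : Set.Icc x t, ‖z2 ξ - z1 ξ‖ := by
  set M := ⨆ ξ : Set.Icc x t, ‖z2 ξ - z1 ξ‖
  have hsub : Icc x t ⊆ Icc a b := Icc_subset_Icc hax htb
  have hz1c : ContinuousOn z1 (Icc x t) := fun ξ hξ =>
    (hz1 ξ (hsub hξ)).continuousAt.continuousWithinAt
  have hz2c : ContinuousOn z2 (Icc x t) := fun ξ hξ =>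
    (hz2 ξ (hsub hξ)).continuousAt.continuousWithinAt
  have hM : ∀ ξ ∈ Icc x t, ‖z2 ξ - z1 ξ‖ ≤ M := fun ξ =>
    le_iSup_Icc_of_continuousOn (hz2c.sub hz1c).norm
  have hLip : ∀ ξ ∈ Ioc x t, ‖f2 (z2 ξ) - f2 (z1 ξ)‖ ≤ L * M := fun ξ hξ => by
    have := hf2.norm_sub_le (z2 ξ) (z1 ξ)
    rw [Real.coe_toNNReal L hL] at this
    exact this.trans (mul_le_mul_of_nonneg_left (hM ξ (Ioc_subset_Icc_self hξ)) hL)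
  rw [one_div, inv_mul_le_iff₀ (by positivity)]
  -- Without integrability of `H ∘ z₁` the integral is the junk value `0`.
  by_cases hint : IntervalIntegrable (fun ξ => H (z1 ξ)) volume x t
  · have hw : ∀ ξ ∈ Icc x t,
        HasDerivAt (z2 - z1) ((f2 (z2 ξ) - f2 (z1 ξ)) + H (z1 ξ)) ξ :=
      fun ξ hξ => ((hz2 ξ (hsub hξ)).sub (hz1 ξ (hsub hξ))).congr_deriv <| by
        rw [hH, Pi.add_apply, Pi.add_apply]
        abel
    have hg : IntervalIntegrable (fun ξ => f2 (z2 ξ) - f2 (z1 ξ)) volume x t :=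
      ((hf2.continuous.comp_continuousOn hz2c).sub
        (hf2.continuous.comp_continuousOn hz1c)).intervalIntegrable_of_Icc hxt
    calc ‖∫ ξ in x..t, H (z1 ξ)‖
          ≤ ‖(z2 - z1) t‖ + ‖(z2 - z1) x‖ + L * M * (t - x) :=
          norm_integral_le_of_hasDerivAt_add hxt hw hg hint hLip
      _ ≤ M + M + L * M * (t - x) := by
          gcongr
          exacts [hM t (right_mem_Icc.2 hxt), hM x (left_mem_Icc.2 hxt)]
      _ = (2 + L * (t - x)) * M := by ring
  · rw [integral_undef hint, norm_zero]
    exact mul_nonneg (by positivity) ((norm_nonneg _).trans (hM x (left_mem_Icc.2 hxt)))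

/-- Gronwall-type lower bound for the distance of two solutions of autonomous
ODEs `z₁' = f₁(z₁)`, `z₂' = f₂(z₂)` with the same initial value, where
`f₂ = f₁ + H` and `f₂` is Lipschitz with constant `L`:
for all `a ≤ x ≤ t ≤ b`,
`sup_{ξ∈[x,t]} ‖z₂ ξ − z₁ ξ‖ ≥ (1/(2 + L(t−x))) ‖∫_x^t H(z₁ ξ) dξ‖`. -/
theorem stmt0
    (d : ℕ) (hd : 1 ≤ d) (a b : ℝ) (hab : a < b)
    (f1 f2 H : (Fin d → ℝ) → (Fin d → ℝ))
    (hH : f2 = f1 + H)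
    (L : ℝ) (hL : 0 ≤ L) (hf2 : LipschitzWith (Real.toNNReal L) f2)
    (η : Fin d → ℝ) (z1 z2 : ℝ → (Fin d → ℝ))
    (hz1a : z1 a = η) (hz2a : z2 a = η)
    (hz1 : ∀ t ∈ Set.Icc a b, HasDerivAt z1 (f1 (z1 t)) t)
    (hz2 : ∀ t ∈ Set.Icc a b, HasDerivAt z2 (f2 (z2 t)) t)
    (x t : ℝ) (hax : a ≤ x) (hxt : x ≤ t) (htb : t ≤ b) :
    (1 / (2 + L * (t - x))) * ‖∫ ξ in x..t, H (z1 ξ)‖ ≤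
      ⨆ ξ : Set.Icc x t, ‖z2 ξ - z1 ξ‖ :=
  stmt0_general d a b f1 f2 H hH L hL hf2 z1 z2 hz1 hz2 x t hax hxt htb
end

section
/- Let z1, z2 : [a,b] → ℝ^d be solutions of z' = f1(z) and z' = f2(z) with z1(a) = z2(a) = η, where f2 = f1 + H and f2 is Lipschitz with constant L. Then sup_{ξ ∈ [a,b]} ‖z2(ξ) − z1(ξ)‖ ≥ (1/(1 + L(b−a))) · ‖∫_a^b H(z1(ξ)) dξ‖. -/
/-!
Since `z₂ - z₁` vanishes at `a` and has derivative `(f₂ ∘ z₂ - f₂ ∘ z₁) + H ∘ z₁`, the fundamental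
theorem of calculus writes `∫ₐᵇ H(z₁)` as `(z₂ - z₁)(b) - ∫ₐᵇ (f₂(z₂) - f₂(z₁))`. With
`M = sup ‖z₂ - z₁‖`, the first term has norm at most `M` and, by the Lipschitz bound, the second
at most `L M (b - a)`.
-/

open Set MeasureTheory intervalIntegral

theorem ContinuousOn.le_iSup_Icc {f : ℝ → ℝ} {a b t : ℝ} (hf : ContinuousOn f (Icc a b))
    (ht : t ∈ Icc a b) : f t ≤ ⨆ ξ : Icc a b, f ξ :=
  le_ciSup (f := fun ξ : Icc a b => f ξ) (isCompact_range hf.domRestrict).bddAbove ⟨t, ht⟩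

section

variable {E F : Type*} [NormedAddCommGroup E] [NormedAddCommGroup F] [NormedSpace ℝ F] {a b : ℝ}

theorem norm_integral_lipschitz_comp_sub_le {f : E → F} {K : NNReal} (hf : LipschitzWith K f)
    (hab : a ≤ b) {z₁ z₂ : ℝ → E} {M : ℝ} (hM : ∀ t ∈ Icc a b, ‖z₂ t - z₁ t‖ ≤ M) :
    ‖∫ t in a..b, (f (z₂ t) - f (z₁ t))‖ ≤ K * M * (b - a) := by
  have hpoint : ∀ t ∈ uIoc a b, ‖f (z₂ t) - f (z₁ t)‖ ≤ K * M := by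
    intro t ht
    rw [uIoc_of_le hab] at ht
    calc ‖f (z₂ t) - f (z₁ t)‖ ≤ K * ‖z₂ t - z₁ t‖ := by
          simpa only [dist_eq_norm] using hf.dist_le_mul (z₂ t) (z₁ t)
      _ ≤ K * M := by gcongr; exact hM t (Ioc_subset_Icc_self ht)
  simpa only [abs_of_nonneg (sub_nonneg.2 hab)] using norm_integral_le_of_norm_le_const hpoint

variable [NormedSpace ℝ E] [CompleteSpace E] {f₁ f₂ H : E → E} {z₁ z₂ : ℝ → E}

theorem integral_comp_eq_sub_sub_integral (hH : f₂ = f₁ + H) (hf₂ : Continuous f₂)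
    (hab : a ≤ b) (hz : z₁ a = z₂ a)
    (hz₁ : ∀ t ∈ Icc a b, HasDerivAt z₁ (f₁ (z₁ t)) t)
    (hz₂ : ∀ t ∈ Icc a b, HasDerivAt z₂ (f₂ (z₂ t)) t)
    (hint : IntervalIntegrable (fun t => H (z₁ t)) volume a b) :
    ∫ t in a..b, H (z₁ t) = (z₂ b - z₁ b) - ∫ t in a..b, (f₂ (z₂ t) - f₂ (z₁ t)) := by
  have hc₁ : ContinuousOn z₁ (Icc a b) :=
    continuousOn_of_forall_continuousAt fun t ht => (hz₁ t ht).continuousAt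
  have hc₂ : ContinuousOn z₂ (Icc a b) :=
    continuousOn_of_forall_continuousAt fun t ht => (hz₂ t ht).continuousAt
  have hint₂ : IntervalIntegrable (fun t => f₂ (z₂ t) - f₂ (z₁ t)) volume a b := by
    refine ContinuousOn.intervalIntegrable ?_
    rw [uIcc_of_le hab]
    exact (hf₂.comp_continuousOn hc₂).sub (hf₂.comp_continuousOn hc₁)
  have hderiv : ∀ t ∈ uIcc a b,
      HasDerivAt (fun t => z₂ t - z₁ t) ((f₂ (z₂ t) - f₂ (z₁ t)) + H (z₁ t)) t := by
    intro t ht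
    rw [uIcc_of_le hab] at ht
    refine ((hz₂ t ht).sub (hz₁ t ht)).congr_deriv ?_
    rw [hH, Pi.add_apply, Pi.add_apply]
    abel
  have hftc := integral_eq_sub_of_hasDerivAt hderiv (hint₂.add hint)
  rw [integral_add hint₂ hint, hz, sub_self, sub_zero] at hftc
  rw [← hftc]
  abel

theorem norm_integral_comp_le_of_hasDerivAt (hH : f₂ = f₁ + H) {K : NNReal}
    (hf₂ : LipschitzWith K f₂) (hab : a ≤ b) (hz : z₁ a = z₂ a)
    (hz₁ : ∀ t ∈ Icc a b, HasDerivAt z₁ (f₁ (z₁ t)) t)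
    (hz₂ : ∀ t ∈ Icc a b, HasDerivAt z₂ (f₂ (z₂ t)) t)
    {M : ℝ} (hM : ∀ t ∈ Icc a b, ‖z₂ t - z₁ t‖ ≤ M) :
    ‖∫ t in a..b, H (z₁ t)‖ ≤ (1 + K * (b - a)) * M := by
  have hMb : ‖z₂ b - z₁ b‖ ≤ M := hM b (right_mem_Icc.2 hab)
  have hM₀ : 0 ≤ M := (norm_nonneg _).trans hMb
  -- Without integrability the integral is `0` by convention.
  by_cases hint : IntervalIntegrable (fun t => H (z₁ t)) volume a b
  · rw [integral_comp_eq_sub_sub_integral hH hf₂.continuous hab hz hz₁ hz₂ hint]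
    calc ‖(z₂ b - z₁ b) - ∫ t in a..b, (f₂ (z₂ t) - f₂ (z₁ t))‖
        ≤ ‖z₂ b - z₁ b‖ + ‖∫ t in a..b, (f₂ (z₂ t) - f₂ (z₁ t))‖ := norm_sub_le _ _
      _ ≤ M + K * M * (b - a) := add_le_add hMb (norm_integral_lipschitz_comp_sub_le hf₂ hab hM)
      _ = (1 + K * (b - a)) * M := by ring
  · rw [integral_undef hint, norm_zero]
    have : 0 ≤ 1 + K * (b - a) := by have := sub_nonneg.2 hab; positivity
    positivity

end

theorem stmt1_general
    (d : ℕ) (a b : ℝ) (hab : a < b)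
    (f1 f2 H : (Fin d → ℝ) → (Fin d → ℝ))
    (hH : f2 = f1 + H)
    (L : ℝ) (hL : 0 ≤ L) (hf2 : LipschitzWith (Real.toNNReal L) f2)
    (η : Fin d → ℝ) (z1 z2 : ℝ → (Fin d → ℝ))
    (hz1a : z1 a = η) (hz2a : z2 a = η)
    (hz1 : ∀ t ∈ Set.Icc a b, HasDerivAt z1 (f1 (z1 t)) t)
    (hz2 : ∀ t ∈ Set.Icc a b, HasDerivAt z2 (f2 (z2 t)) t) :
    (1 / (1 + L * (b - a))) * ‖∫ ξ in a..b, H (z1 ξ)‖ ≤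
      ⨆ ξ : Set.Icc a b, ‖z2 ξ - z1 ξ‖ := by
  have hdist : ContinuousOn (fun t => ‖z2 t - z1 t‖) (Icc a b) :=
    continuousOn_of_forall_continuousAt fun t ht =>
      ((hz2 t ht).continuousAt.sub (hz1 t ht).continuousAt).norm
  have hbound := norm_integral_comp_le_of_hasDerivAt hH hf2 hab.le (hz1a.trans hz2a.symm) hz1 hz2
    fun t ht => hdist.le_iSup_Icc ht
  rw [Real.coe_toNNReal L hL] at hbound
  have hden : 0 < 1 + L * (b - a) := by have := sub_pos.2 hab; positivity
  rwa [one_div_mul_eq_div, div_le_iff₀ hden, mul_comm]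

/-- Gronwall-type lower bound for the distance of two solutions of autonomous
ODEs `z₁' = f₁(z₁)`, `z₂' = f₂(z₂)` with the same initial value, where
`f₂ = f₁ + H` and `f₂` is Lipschitz with constant `L`:
for all `a ≤ x ≤ t ≤ b`,
`sup_{ξ∈[x,t]} ‖z₂ ξ − z₁ ξ‖ ≥ (1/(2 + L(t−x))) ‖∫_x^t H(z₁ ξ) dξ‖`. -/
theorem stmt1
    (d : ℕ) (hd : 1 ≤ d) (a b : ℝ) (hab : a < b)
    (f1 f2 H : (Fin d → ℝ) → (Fin d → ℝ))
    (hH : f2 = f1 + H)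
    (L : ℝ) (hL : 0 ≤ L) (hf2 : LipschitzWith (Real.toNNReal L) f2)
    (η : Fin d → ℝ) (z1 z2 : ℝ → (Fin d → ℝ))
    (hz1a : z1 a = η) (hz2a : z2 a = η)
    (hz1 : ∀ t ∈ Set.Icc a b, HasDerivAt z1 (f1 (z1 t)) t)
    (hz2 : ∀ t ∈ Set.Icc a b, HasDerivAt z2 (f2 (z2 t)) t) :
    (1 / (1 + L * (b - a))) * ‖∫ ξ in a..b, H (z1 ξ)‖ ≤
      ⨆ ξ : Set.Icc a b, ‖z2 ξ - z1 ξ‖ :=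
  stmt1_general d a b hab f1 f2 H hH L hL hf2 η z1 z2 hz1a hz2a hz1 hz2
end
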